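/- Let n = 2m+1 be odd, p·q = c, p^n + q^n = 2d, and X = p·X_n + q·X_n^{−1} with X_n the cyclic shift matrix. Then C_{n,c,d}(X) = 0, i.e., X^n − ∑_{j=0}^{m−1} B_{m,j}·c^{m−j}·X^{2j+1} − 2d·I = 0, where B_{m,j} = (−1)^{m−1−j}·(2m+1)/(2j+1)·binom(m+j,2j). -/

import Mathlib

/-!
The cyclic shift `S` satisfies `S ^ n = 1`, so `x = p • S` and `y = q • S⁻¹` commute, with
`x * y = c` and `x ^ n + y ^ n = p ^ n + q ^ n = 2 d`. The first-kind Dickson polynomial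
`D_n(·, c)` sends `x + y` to `x ^ n + y ^ n` whenever `x * y = c`, hence `D_n(X, c) = 2 d`, and the
Cardano polynomial is exactly `D_n(·, c) - 2 d`. Its coefficients come from
`D_{k+1} = 2 E_{k+1} - X E_k`, where the second-kind Dickson polynomial `E_k` has the coefficients
`(-c) ^ i * binom(k - i, i)` by Pascal's rule.
-/

open Finset

/-- `|B_{m,j}|` of the statement, written without division (see `cardanoCoeff_eq_div`). -/
def cardanoCoeff (m j : ℕ) : ℕ := (m + j + 1).choose (2 * j + 1) + (m + j).choose (2 * j + 1)

theorem cardanoCoeff_self (m : ℕ) : cardanoCoeff m m = 1 := by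
  rw [cardanoCoeff, ← two_mul, Nat.choose_self, Nat.choose_eq_zero_of_lt (by omega)]

theorem two_mul_add_one_mul_cardanoCoeff (m j : ℕ) :
    (2 * j + 1) * cardanoCoeff m j = (2 * m + 1) * (m + j).choose (2 * j) := by
  rcases le_or_gt j m with hjm | hmj
  · have h1 := Nat.add_one_mul_choose_eq (m + j) (2 * j)
    have h2 := Nat.choose_succ_right_eq (m + j) (2 * j)
    rw [show m + j - 2 * j = m - j by omega] at h2
    rw [cardanoCoeff, mul_add, mul_comm, ← h1, mul_comm (2 * j + 1), h2,
      show 2 * m + 1 = m + j + 1 + (m - j) by omega]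
    ring
  · simp [cardanoCoeff, Nat.choose_eq_zero_of_lt (show m + j < 2 * j by omega),
      Nat.choose_eq_zero_of_lt (show m + j + 1 < 2 * j + 1 by omega),
      Nat.choose_eq_zero_of_lt (show m + j < 2 * j + 1 by omega)]

theorem cardanoCoeff_eq_div {K : Type*} [Field K] [CharZero K] (m j : ℕ) :
    (cardanoCoeff m j : K) = (2 * m + 1) / (2 * j + 1) * (m + j).choose (2 * j) := by
  have h := congrArg (Nat.cast : ℕ → K) (two_mul_add_one_mul_cardanoCoeff m j)
  push_cast at h
  rw [div_mul_eq_mul_div, eq_div_iff (by norm_cast), mul_comm, h]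

theorem neg_one_pow_mul_div_mul_choose_mul_pow_eq {K : Type*} [Field K] [CharZero K] (c : K)
    {m j : ℕ} (hj : j < m) :
    (-1 : K) ^ (m - 1 - j) * (2 * (m : K) + 1) / (2 * (j : K) + 1) *
        ((m + j).choose (2 * j) : K) * c ^ (m - j) =
      -((cardanoCoeff m j : K) * (-c) ^ (m - j)) := by
  obtain ⟨e, rfl⟩ := Nat.exists_eq_add_of_lt hj
  rw [cardanoCoeff_eq_div, show j + e + 1 - 1 - j = e by omega,
    show j + e + 1 - j = e + 1 by omega]
  ring

section SecondKindCoefficients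

variable {R : Type*} [CommRing R] (v w : R)

theorem sum_choose_two_mul_succ (m : ℕ) :
    ∑ j ∈ range (m + 2), ((m + 1 + j).choose (2 * j) : R) * v ^ (m + 1 - j) * w ^ (2 * j) =
      w * ∑ j ∈ range (m + 1),
          ((m + j + 1).choose (2 * j + 1) : R) * v ^ (m - j) * w ^ (2 * j + 1) +
        v * ∑ j ∈ range (m + 1), ((m + j).choose (2 * j) : R) * v ^ (m - j) * w ^ (2 * j) := by
  have hshift : v * ∑ j ∈ range (m + 1), ((m + j).choose (2 * j) : R) * v ^ (m - j) * w ^ (2 * j)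
      = ∑ j ∈ range (m + 1), ((m + j + 1).choose (2 * j + 2) : R) * v ^ (m - j) * w ^ (2 * j + 2)
        + v ^ (m + 1) := by
    conv_lhs => rw [mul_sum, sum_range_succ']
    conv_rhs => rw [sum_range_succ, Nat.choose_eq_zero_of_lt (by omega), Nat.cast_zero,
      zero_mul, zero_mul, add_zero]
    congr 1
    · refine sum_congr rfl fun j hj => ?_
      rw [show m - j = m - (j + 1) + 1 by have := mem_range.1 hj; omega]
      ring_nf
    · simp [pow_succ']
  rw [hshift, sum_range_succ', mul_sum, ← add_assoc, ← sum_add_distrib]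
  simp only [Nat.choose_zero_right, Nat.cast_one, mul_zero, pow_zero, mul_one, Nat.sub_zero,
    one_mul, add_zero]
  congr 1
  refine sum_congr rfl fun j _ => ?_
  rw [show m + 1 + (j + 1) = m + j + 1 + 1 by ring, show 2 * (j + 1) = 2 * j + 1 + 1 by ring,
    Nat.choose_succ_succ', Nat.add_sub_add_right]
  push_cast
  ring

theorem sum_choose_two_mul_add_one_succ (m : ℕ) :
    ∑ j ∈ range (m + 2),
        ((m + 1 + j + 1).choose (2 * j + 1) : R) * v ^ (m + 1 - j) * w ^ (2 * j + 1) =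
      w * ∑ j ∈ range (m + 2), ((m + 1 + j).choose (2 * j) : R) * v ^ (m + 1 - j) * w ^ (2 * j) +
        v * ∑ j ∈ range (m + 1),
          ((m + j + 1).choose (2 * j + 1) : R) * v ^ (m - j) * w ^ (2 * j + 1) := by
  rw [sum_range_succ, sum_range_succ _ (m + 1), mul_add w, mul_sum, mul_sum,
    add_right_comm (∑ i ∈ _, _), ← sum_add_distrib]
  congr 1
  · refine sum_congr rfl fun j hj => ?_
    rw [Nat.choose_succ_succ', show m + 1 - j = m - j + 1 by have := mem_range.1 hj; omega,
      add_right_comm m 1 j]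
    push_cast
    ring
  · rw [show m + 1 + (m + 1) = 2 * (m + 1) by ring]
    simp only [Nat.choose_self, Nat.sub_self]
    ring

end SecondKindCoefficients

namespace Polynomial

variable {R : Type*} [CommRing R] (a : R)

theorem dickson_two_eq_sum_choose (m : ℕ) :
    dickson 2 a (2 * m) = ∑ j ∈ range (m + 1),
        ((m + j).choose (2 * j) : R[X]) * (-C a) ^ (m - j) * X ^ (2 * j) ∧
    dickson 2 a (2 * m + 1) = ∑ j ∈ range (m + 1),
        ((m + j + 1).choose (2 * j + 1) : R[X]) * (-C a) ^ (m - j) * X ^ (2 * j + 1) := by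
  induction m with
  | zero => norm_num
  | succ m ih =>
    obtain ⟨heven, hodd⟩ := ih
    have heven' : dickson 2 a (2 * (m + 1)) = ∑ j ∈ range (m + 2),
        ((m + 1 + j).choose (2 * j) : R[X]) * (-C a) ^ (m + 1 - j) * X ^ (2 * j) := by
      rw [show 2 * (m + 1) = 2 * m + 2 by ring, dickson_add_two, heven, hodd, sub_eq_add_neg,
        ← neg_mul]
      exact (sum_choose_two_mul_succ (-C a) X m).symm
    refine ⟨heven', ?_⟩
    rw [show 2 * (m + 1) + 1 = 2 * m + 1 + 2 by ring, dickson_add_two,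
      show 2 * m + 1 + 1 = 2 * (m + 1) by ring, heven', hodd, sub_eq_add_neg, ← neg_mul]
    exact (sum_choose_two_mul_add_one_succ (-C a) X m).symm

theorem dickson_one_add_one :
    ∀ n, dickson 1 a (n + 1) = 2 * dickson 2 a (n + 1) - X * dickson 2 a n
  | 0 => by norm_num; ring
  | 1 => by norm_num [dickson_two]; ring
  | n + 2 => by
    rw [dickson_add_two 1, dickson_one_add_one (n + 1), dickson_one_add_one n,
      dickson_add_two 2 a (n + 1), dickson_add_two 2 a n]
    ring

theorem dickson_one_two_mul_add_one (m : ℕ) :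
    dickson 1 a (2 * m + 1) = ∑ j ∈ range (m + 1),
      (cardanoCoeff m j : R[X]) * (-C a) ^ (m - j) * X ^ (2 * j + 1) := by
  obtain ⟨heven, hodd⟩ := dickson_two_eq_sum_choose a m
  rw [dickson_one_add_one, hodd, heven, mul_sum, mul_sum, ← sum_sub_distrib]
  refine sum_congr rfl fun j _ => ?_
  rw [cardanoCoeff, Nat.choose_succ_succ']
  push_cast
  ring

variable {A : Type*} [Ring A] [Algebra R A]

theorem aeval_dickson_one_add {x y : A} (hxy : Commute x y) (hprod : x * y = algebraMap R A a) :
    ∀ n, aeval (x + y) (dickson 1 a n) = x ^ n + y ^ n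
  | 0 => by rw [dickson_zero]; norm_num [map_ofNat]
  | 1 => by simp
  | n + 2 => by
    have hyx : y * x ^ (n + 1) = x * y * x ^ n := by rw [pow_succ', ← mul_assoc, hxy.eq]
    rw [dickson_add_two, map_sub, map_mul, map_mul, aeval_X, aeval_C,
      aeval_dickson_one_add hxy hprod (n + 1), aeval_dickson_one_add hxy hprod n, ← hprod,
      add_mul, mul_add, mul_add, mul_add, hyx, mul_assoc x y (y ^ n), ← pow_succ' y n,
      ← pow_succ' x (n + 1), ← pow_succ' y (n + 1)]
    abel

theorem aeval_dickson_one_two_mul_add_one (z : A) (m : ℕ) :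
    aeval z (dickson 1 a (2 * m + 1)) =
      ∑ j ∈ range (m + 1), ((cardanoCoeff m j : R) * (-a) ^ (m - j)) • z ^ (2 * j + 1) := by
  rw [dickson_one_two_mul_add_one, map_sum]
  refine sum_congr rfl fun j _ => ?_
  simp [Algebra.smul_def]

end Polynomial

def cyclicShift (R : Type*) [Zero R] [One R] (n : ℕ) : Matrix (Fin n) (Fin n) R :=
  Matrix.of fun i j => if (i : ℕ) = ((j : ℕ) + 1) % n then 1 else 0

section CyclicShift

variable {R : Type*} [Semiring R]

theorem cyclicShift_pow (n k : ℕ) :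
    cyclicShift R n ^ k =
      Matrix.of fun i j : Fin n => if (i : ℕ) = ((j : ℕ) + k) % n then 1 else 0 := by
  induction k with
  | zero =>
    ext i j
    simp [Matrix.one_apply, Nat.mod_eq_of_lt j.isLt, Fin.ext_iff]
  | succ k ih =>
    ext i j
    rw [pow_succ, ih, Matrix.mul_apply, sum_eq_single ⟨(j + 1) % n, Nat.mod_lt _ j.pos⟩]
    · simp [cyclicShift, Nat.mod_add_mod, add_assoc, add_comm 1 k]
    · intro l _ hl
      have hne : (l : ℕ) ≠ ((j : ℕ) + 1) % n := fun h => hl (Fin.ext h)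
      simp [cyclicShift, hne]
    · simp

theorem cyclicShift_pow_self (n : ℕ) : cyclicShift R n ^ n = 1 := by
  ext i j
  simp [cyclicShift_pow, Matrix.one_apply, Nat.mod_eq_of_lt j.isLt, Fin.ext_iff]

end CyclicShift

theorem stmt_19 (m : ℕ) (c d : ℝ) (p q : ℂ)
    (hc : p * q = (c : ℂ)) (hd : p ^ (2 * m + 1) + q ^ (2 * m + 1) = 2 * (d : ℂ)) :
    let n : ℕ := 2 * m + 1
    let S : Matrix (Fin n) (Fin n) ℂ :=
      Matrix.of fun i j => if (i : ℕ) = ((j : ℕ) + 1) % n then 1 else 0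
    let X : Matrix (Fin n) (Fin n) ℂ := p • S + q • S⁻¹
    X ^ n -
        (∑ j ∈ Finset.range m,
          (((-1 : ℂ) ^ (m - 1 - j) * (2 * (m : ℂ) + 1) / (2 * (j : ℂ) + 1) *
            ((m + j).choose (2 * j) : ℂ)) * (c : ℂ) ^ (m - j)) • X ^ (2 * j + 1)) -
        (2 * (d : ℂ)) • (1 : Matrix (Fin n) (Fin n) ℂ) = 0 := by
  intro n S X
  have hS : S ^ n = 1 := cyclicShift_pow_self n
  have hSinv : S⁻¹ = S ^ (2 * m) := Matrix.inv_eq_right_inv (by rw [← pow_succ']; exact hS)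
  have hcomm : Commute (p • S) (q • S⁻¹) := by
    rw [hSinv]
    exact ((Commute.self_pow S _).smul_left p).smul_right q
  have hprod : p • S * q • S⁻¹ = algebraMap ℂ _ (c : ℂ) := by
    rw [smul_mul_smul_comm, hSinv, ← pow_succ', hS, hc, Algebra.algebraMap_eq_smul_one]
  have hpow : (p • S) ^ n + (q • S⁻¹) ^ n = (2 * (d : ℂ)) • 1 := by
    rw [smul_pow, smul_pow, hS, hSinv, ← pow_mul, mul_comm, pow_mul, hS, one_pow, ← add_smul, hd]
  have key : Polynomial.aeval X (Polynomial.dickson 1 (c : ℂ) n) = _ :=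
    Polynomial.aeval_dickson_one_add (c : ℂ) hcomm hprod n
  rw [Polynomial.aeval_dickson_one_two_mul_add_one, hpow, sum_range_succ, cardanoCoeff_self,
    Nat.cast_one, one_mul, Nat.sub_self, pow_zero, one_smul] at key
  rw [← key, sum_congr rfl fun j hj => by
      rw [neg_one_pow_mul_div_mul_choose_mul_pow_eq _ (mem_range.1 hj), neg_smul],
    sum_neg_distrib]
  abel
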